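/- arXiv:1804.01326 — 2 statements merged into one kernel-verified Lean document; each statement's English description precedes it below -/
import Mathlib

section
/- Let T be a triangulated category and t = (U, V) a t-structure on T (a pair of full subcategories with Hom(U,V)=0 for U∈U, V∈V; U[1]⊆U and V⊆V[1]; and every object X fits in a triangle U → X → V → U[1] with U∈U, V∈V). Then the inclusion U → T admits a right adjoint and the inclusion V → T admits a left adjoint. -/
open CategoryTheory CategoryTheory.Limits CategoryTheory.Pretriangulated

universe v u

/-!
For `X` with decomposition triangle `U' ⟶ X ⟶ V' ⟶ U'⟦1⟧` and `A ∈ U`, both `A ⟶ V'⟦-1⟧` and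
`A ⟶ V'` vanish, so the long exact sequence of `Hom(A, -)` makes composition with `U' ⟶ X`
bijective: `U' ⟶ X` is a coreflection of `X` into `U`, which is all a right adjoint of the
inclusion needs. Dually, `Hom(-, B)` for `B ∈ V` makes `X ⟶ V'` a reflection of `X` into `V`.
-/

namespace CategoryTheory

namespace ObjectProperty

variable {C : Type*} [Category* C] (P : ObjectProperty C)

lemma isLeftAdjoint_ι_of_forall_exists_coreflection
    (h : ∀ X : C, ∃ (A : C) (_ : P A) (f : A ⟶ X),
      ∀ B : C, P B → Function.Bijective fun φ : B ⟶ A ↦ φ ≫ f) :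
    P.ι.IsLeftAdjoint := by
  rw [Functor.isLeftAdjoint_iff_rightAdjointObjIsDefined_eq_top]
  ext X
  obtain ⟨A, hA, f, hf⟩ := h X
  let e : (P.ι.op ⋙ yoneda.obj X).RepresentableBy ⟨A, hA⟩ :=
    { homEquiv {B} := P.fullyFaithfulι.homEquiv.trans (Equiv.ofBijective _ (hf B.obj B.property))
      homEquiv_comp _ _ := by simp [Functor.FullyFaithful.homEquiv] }
  simpa [Functor.rightAdjointObjIsDefined_iff] using e.isRepresentable

lemma isRightAdjoint_ι_of_forall_exists_reflection
    (h : ∀ X : C, ∃ (B : C) (_ : P B) (g : X ⟶ B),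
      ∀ A : C, P A → Function.Bijective fun ψ : B ⟶ A ↦ g ≫ ψ) :
    P.ι.IsRightAdjoint := by
  rw [Functor.isRightAdjoint_iff_leftAdjointObjIsDefined_eq_top]
  ext X
  obtain ⟨B, hB, g, hg⟩ := h X
  let e : (P.ι ⋙ coyoneda.obj (Opposite.op X)).CorepresentableBy ⟨B, hB⟩ :=
    { homEquiv {A} := P.fullyFaithfulι.homEquiv.trans (Equiv.ofBijective _ (hg A.obj A.property))
      homEquiv_comp _ _ := by simp [Functor.FullyFaithful.homEquiv] }
  simpa [Functor.leftAdjointObjIsDefined_iff] using e.isCorepresentable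

end ObjectProperty

namespace Pretriangulated.Triangle

variable {C : Type*} [Category* C] [HasZeroObject C] [HasShift C ℤ] [Preadditive C]
  [∀ n : ℤ, (CategoryTheory.shiftFunctor C n).Additive] [Pretriangulated C]
  {τ : Triangle C}

lemma comp_mor₁_bijective (hτ : τ ∈ distTriang C) {A : C}
    (h₃ : ∀ u : A ⟶ τ.obj₃, u = 0) (h₃' : ∀ u : A ⟶ τ.obj₃⟦(-1 : ℤ)⟧, u = 0) :
    Function.Bijective fun φ : A ⟶ τ.obj₁ ↦ φ ≫ τ.mor₁ := by
  refine ⟨(injective_iff_map_eq_zero (Preadditive.rightComp A τ.mor₁)).2 fun φ hφ ↦ ?_,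
    fun ψ ↦ ?_⟩
  · obtain ⟨u, rfl⟩ := coyoneda_exact₂ _ (inv_rot_of_distTriang _ hτ) φ hφ
    obtain rfl : u = 0 := h₃' u
    exact zero_comp
  · obtain ⟨φ, rfl⟩ := coyoneda_exact₂ _ hτ ψ (h₃ _)
    exact ⟨φ, rfl⟩

lemma mor₂_comp_bijective (hτ : τ ∈ distTriang C) {B : C}
    (h₁ : ∀ u : τ.obj₁ ⟶ B, u = 0) (h₁' : ∀ u : τ.obj₁⟦(1 : ℤ)⟧ ⟶ B, u = 0) :
    Function.Bijective fun ψ : τ.obj₃ ⟶ B ↦ τ.mor₂ ≫ ψ := by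
  refine ⟨(injective_iff_map_eq_zero (Preadditive.leftComp B τ.mor₂)).2 fun ψ hψ ↦ ?_,
    fun φ ↦ ?_⟩
  · obtain ⟨u, rfl⟩ := yoneda_exact₃ _ hτ ψ hψ
    rw [h₁' u, comp_zero]
  · obtain ⟨ψ, rfl⟩ := yoneda_exact₂ _ hτ φ (h₁ _)
    exact ⟨ψ, rfl⟩

end Pretriangulated.Triangle

end CategoryTheory

/-- for a t-structure `t = (U, V)` on a triangulated category `T`
(Hom-orthogonality, shift-closure, and decomposition triangles), the inclusion
`U → T` admits a right adjoint and the inclusion `V → T` admits a left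
adjoint (the truncation functors). -/
theorem stmt_9 (T : Type u) [Category.{v} T] [HasZeroObject T] [Preadditive T]
    [HasShift T ℤ] [∀ n : ℤ, (shiftFunctor T n).Additive] [Pretriangulated T]
    (U V : Set T)
    (t1 : ∀ X ∈ U, ∀ Y ∈ V, ∀ f : X ⟶ Y, f = 0)
    (t2U : ∀ X ∈ U, (X⟦(1 : ℤ)⟧) ∈ U)
    (t2V : ∀ X ∈ V, (X⟦(-1 : ℤ)⟧) ∈ V)
    (t3 : ∀ X : T, ∃ (U' : T) (_ : U' ∈ U) (V' : T) (_ : V' ∈ V)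
      (f : U' ⟶ X) (g : X ⟶ V') (h : V' ⟶ U'⟦(1 : ℤ)⟧),
        Triangle.mk f g h ∈ distTriang T) :
    (ObjectProperty.ι (· ∈ U)).IsLeftAdjoint ∧
      (ObjectProperty.ι (· ∈ V)).IsRightAdjoint := by
  constructor
  · refine ObjectProperty.isLeftAdjoint_ι_of_forall_exists_coreflection _ fun X ↦ ?_
    obtain ⟨U', hU', V', hV', f, _, _, hτ⟩ := t3 X
    exact ⟨U', hU', f, fun A hA ↦ Triangle.comp_mor₁_bijective hτ
      (t1 A hA V' hV') (t1 A hA _ (t2V V' hV'))⟩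
  · refine ObjectProperty.isRightAdjoint_ι_of_forall_exists_reflection _ fun X ↦ ?_
    obtain ⟨U', hU', V', hV', _, g, _, hτ⟩ := t3 X
    exact ⟨V', hV', g, fun B hB ↦ Triangle.mor₂_comp_bijective hτ
      (t1 U' hU' B hB) (t1 _ (t2U U' hU') B hB)⟩
end

section
/- Let C be a partial cosilting object in a triangulated category T with associated t-structure t = (U, V) and heart H(C) = U[-1] ∩ V. Then H_t^0(C) is an injective cogenerator of H(C): it is injective in the abelian category H(C), and for every nonzero M ∈ H(C) there is a nonzero morphism M → H_t^0(C). In particular, for M ∈ H(C) one has a natural isomorphism Hom_T(M, C) ≅ Hom_{H(C)}(M, H_t^0(C)). -/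
open CategoryTheory CategoryTheory.Limits CategoryTheory.Pretriangulated

universe v u

/-!
Write `A := (τU (C⟦1⟧))⟦-1⟧`. As `Hom(C⟦1⟧, C⟦j⟧) = 0` for `j > 1`, the truncation triangle of
`C⟦1⟧` shows `A ∈ V`; hence `H⁰(C) = τV A ≅ A`, and the shifted truncation map `A ⟶ C` induces
bijections `Hom(M, H⁰(C)) ≅ Hom(M, C)`, natural in `M` with `M⟦1⟧ ∈ U`. So `H⁰(C)` represents
`Hom_T(-, C)` on the heart, and two properties of this functor remain. It kills no nonzero `M` of
the heart: otherwise `M⟦1⟧ ∈ U ∩ V`, so `M = 0`. It sends monomorphisms `f : X ⟶ Y` of the heart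
to surjections: for `E ⟶ X ⟶ Y ⟶ E⟦1⟧` distinguished, the composite `(τU (E⟦1⟧))⟦-1⟧ ⟶ E ⟶ X`
factors through `H⁰(E)`, which lies in the heart, so it vanishes because `f` is mono; this forces
`Hom(E, C) = 0`.
-/

namespace CategoryTheory

section Category

variable {C : Type*} [Category C]

lemma Functor.FullyFaithful.bijective_comp_map_iff {D : Type*} [Category D] {F : C ⥤ D}
    (hF : F.FullyFaithful) {X Y Z : C} (g : Y ⟶ Z) :
    Function.Bijective (fun u : F.obj X ⟶ F.obj Y => u ≫ F.map g) ↔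
      Function.Bijective (fun u : X ⟶ Y => u ≫ g) := by
  have h : (fun u : F.obj X ⟶ F.obj Y => u ≫ F.map g) ∘ F.map = F.map ∘ (fun u => u ≫ g) :=
    funext fun u => (F.map_comp u g).symm
  rw [← Function.Bijective.of_comp_iff _ (hF.map_bijective X Y), h,
    Function.Bijective.of_comp_iff' (hF.map_bijective X Z)]

lemma bijective_comp_isIso_comp {X Y Y' Z : C} (f : Y ⟶ Y') [IsIso f] (g : Y' ⟶ Z) :
    Function.Bijective (fun u : X ⟶ Y => u ≫ f ≫ g) ↔
      Function.Bijective (fun u : X ⟶ Y' => u ≫ g) := by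
  have h : (fun u : X ⟶ Y => u ≫ f ≫ g) = (fun u => u ≫ g) ∘ (asIso f).homToEquiv :=
    funext fun u => (Category.assoc u f g).symm
  rw [h, Function.Bijective.of_comp_iff _ (asIso f).homToEquiv.bijective]

lemma forall_eq_zero_congr [HasZeroMorphisms C] {X Y X' Y' : C} (e : (X ⟶ Y) ≃ (X' ⟶ Y')) :
    (∀ f : X ⟶ Y, f = 0) ↔ ∀ f : X' ⟶ Y', f = 0 := by
  simp only [← subsingleton_iff_forall_eq (0 : _ ⟶ _)]
  exact e.subsingleton_congr

variable [HasZeroMorphisms C] [HasShift C ℤ]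

lemma forall_shift_hom_eq_zero_iff (X Y : C) {a b c : ℤ} (h : c + a = b) :
    (∀ f : X⟦a⟧ ⟶ Y⟦b⟧, f = 0) ↔ ∀ f : X ⟶ Y⟦c⟧, f = 0 :=
  forall_eq_zero_congr <| ((shiftFunctorAdd' C c a b h).app Y).homToEquiv.trans
    (Functor.FullyFaithful.ofFullyFaithful (shiftFunctor C a)).homEquiv.symm

lemma forall_hom_shift_zero_eq_zero_iff (X Y : C) :
    (∀ f : X ⟶ Y⟦(0 : ℤ)⟧, f = 0) ↔ ∀ f : X ⟶ Y, f = 0 :=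
  forall_eq_zero_congr ((shiftFunctorZero C ℤ).app Y).homToEquiv

def leftPerpPos (K : C) : Set C := {Y | ∀ i : ℤ, 0 < i → ∀ f : Y ⟶ K⟦i⟧, f = 0}

variable {K Y : C}

lemma shift_mem_leftPerpPos_iff (n : ℤ) :
    Y⟦n⟧ ∈ leftPerpPos K ↔ ∀ j : ℤ, -n < j → ∀ f : Y ⟶ K⟦j⟧, f = 0 := by
  refine ⟨fun h j hj => ?_, fun h i hi => ?_⟩
  · exact (forall_shift_hom_eq_zero_iff Y K rfl).1 (h _ (by omega))
  · exact (forall_shift_hom_eq_zero_iff Y K (sub_add_cancel i n)).2 (h _ (by omega))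

lemma shift_neg_one_mem_leftPerpPos (hY : Y ∈ leftPerpPos K) : Y⟦(-1 : ℤ)⟧ ∈ leftPerpPos K :=
  (shift_mem_leftPerpPos_iff _).2 fun j hj => hY j (by omega)

lemma shift_one_mem_leftPerpPos (hY : Y ∈ leftPerpPos K) (h₀ : ∀ f : Y ⟶ K, f = 0) :
    Y⟦(1 : ℤ)⟧ ∈ leftPerpPos K := by
  refine (shift_mem_leftPerpPos_iff _).2 fun j hj => ?_
  obtain rfl | hj := eq_or_lt_of_le (show 0 ≤ j by omega)
  · exact (forall_hom_shift_zero_eq_zero_iff Y K).2 h₀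
  · exact hY j hj

lemma shift_neg_one_hom_eq_zero (hY : Y ∈ leftPerpPos K) : ∀ f : Y⟦(-1 : ℤ)⟧ ⟶ K, f = 0 :=
  (forall_hom_shift_zero_eq_zero_iff _ K).1 <|
    (forall_shift_hom_eq_zero_iff Y K (add_neg_cancel 1)).2 (hY 1 one_pos)

lemma shift_one_hom_eq_zero (hY : Y ∈ leftPerpPos K) {j : ℤ} (hj : 1 < j) :
    ∀ f : Y⟦(1 : ℤ)⟧ ⟶ K⟦j⟧, f = 0 :=
  (forall_shift_hom_eq_zero_iff Y K (sub_add_cancel j 1)).2 (hY _ (by omega))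

end Category

structure TruncationData (T : Type u) [Category.{v} T] [HasZeroObject T] [Preadditive T]
    [HasShift T ℤ] [∀ n : ℤ, (shiftFunctor T n).Additive] [Pretriangulated T] where
  U : Set T
  V : Set T
  hom_eq_zero : ∀ X ∈ U, ∀ Y ∈ V, ∀ f : X ⟶ Y, f = 0
  shift_mem_U : ∀ X ∈ U, X⟦(1 : ℤ)⟧ ∈ U
  τU : T → T
  τV : T → T
  τU_mem : ∀ X, τU X ∈ U
  τV_mem : ∀ X, τV X ∈ V
  ι : ∀ X, τU X ⟶ X
  π : ∀ X, X ⟶ τV X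
  δ : ∀ X, τV X ⟶ (τU X)⟦(1 : ℤ)⟧
  triangle_distinguished : ∀ X, Triangle.mk (ι X) (π X) (δ X) ∈ distTriang T

namespace TruncationData

variable {T : Type u} [Category.{v} T] [HasZeroObject T] [Preadditive T]
  [HasShift T ℤ] [∀ n : ℤ, (shiftFunctor T n).Additive] [Pretriangulated T]

variable (t : TruncationData T)

lemma π_comp_bijective (X : T) {S : T} (hS : S ∈ t.V) :
    Function.Bijective (fun u : t.τV X ⟶ S => t.π X ≫ u) := by
  constructor
  · intro u v huv
    rw [← sub_eq_zero]
    obtain ⟨w, hw⟩ : ∃ w : (t.τU X)⟦(1 : ℤ)⟧ ⟶ S, u - v = t.δ X ≫ w :=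
      Triangle.yoneda_exact₃ _ (t.triangle_distinguished X) (u - v)
        (show t.π X ≫ (u - v) = 0 by rw [Preadditive.comp_sub, sub_eq_zero]; exact huv)
    rw [hw, t.hom_eq_zero _ (t.shift_mem_U _ (t.τU_mem X)) _ hS w, comp_zero]
  · intro v
    obtain ⟨u, hu⟩ := Triangle.yoneda_exact₂ _ (t.triangle_distinguished X) v
      (t.hom_eq_zero _ (t.τU_mem X) _ hS _)
    exact ⟨u, hu.symm⟩

lemma isIso_π {X : T} (hX : X ∈ t.V) : IsIso (t.π X) := by
  obtain ⟨r, hr⟩ := (t.π_comp_bijective X hX).2 (𝟙 X)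
  refine ⟨r, hr, (t.π_comp_bijective X (t.τV_mem X)).1 ?_⟩
  simp only [reassoc_of% hr, Category.comp_id]

lemma ι_comp_bijective (hshift : ∀ Y ∈ t.V, Y⟦(-1 : ℤ)⟧ ∈ t.V) (X : T) {M : T} (hM : M ∈ t.U) :
    Function.Bijective (fun u : M ⟶ t.τU X => u ≫ t.ι X) := by
  constructor
  · intro u v huv
    rw [← sub_eq_zero]
    obtain ⟨w, hw⟩ : ∃ w : M ⟶ (t.τV X)⟦(-1 : ℤ)⟧, u - v = w ≫ _ :=
      Triangle.coyoneda_exact₂ _ (inv_rot_of_distTriang _ (t.triangle_distinguished X)) (u - v)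
        (show (u - v) ≫ t.ι X = 0 by rw [Preadditive.sub_comp, sub_eq_zero]; exact huv)
    rw [hw, t.hom_eq_zero _ hM _ (hshift _ (t.τV_mem X)) w]
    exact zero_comp
  · intro v
    obtain ⟨u, hu⟩ := Triangle.coyoneda_exact₂ _ (t.triangle_distinguished X) v
      (t.hom_eq_zero _ hM _ (t.τV_mem X) _)
    exact ⟨u, hu.symm⟩

def ιShifted (X : T) : (t.τU (X⟦(1 : ℤ)⟧))⟦(-1 : ℤ)⟧ ⟶ X :=
  (t.ι (X⟦(1 : ℤ)⟧))⟦(-1 : ℤ)⟧' ≫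
    (shiftFunctorCompIsoId T (1 : ℤ) (-1) (add_neg_cancel 1)).hom.app X

lemma shift_map_ιShifted (X : T) : (t.ιShifted X)⟦(1 : ℤ)⟧' =
    (shiftFunctorCompIsoId T (-1 : ℤ) 1 (neg_add_cancel 1)).hom.app _ ≫ t.ι (X⟦(1 : ℤ)⟧) := by
  simp [ιShifted, shift_neg_shift', shift_shiftFunctorCompIsoId_add_neg_cancel_hom_app]

lemma ιShifted_comp_eq_zero_iff {X Y : T} (w : X ⟶ Y) :
    t.ιShifted X ≫ w = 0 ↔ t.ι (X⟦(1 : ℤ)⟧) ≫ w⟦(1 : ℤ)⟧' = 0 := by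
  rw [← Functor.map_eq_zero_iff (shiftFunctor T (1 : ℤ)), Functor.map_comp, shift_map_ιShifted,
    Category.assoc, Preadditive.IsIso.comp_left_eq_zero]

lemma ιShifted_comp_bijective (hshift : ∀ Y ∈ t.V, Y⟦(-1 : ℤ)⟧ ∈ t.V) (X : T) {M : T}
    (hM : M⟦(1 : ℤ)⟧ ∈ t.U) :
    Function.Bijective (fun u : M ⟶ (t.τU (X⟦(1 : ℤ)⟧))⟦(-1 : ℤ)⟧ => u ≫ t.ιShifted X) := by
  rw [← (Functor.FullyFaithful.ofFullyFaithful (shiftFunctor T (1 : ℤ))).bijective_comp_map_iff,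
    shift_map_ιShifted, bijective_comp_isIso_comp]
  exact t.ι_comp_bijective hshift _ hM

abbrev heart : ObjectProperty T := fun X => X⟦(1 : ℤ)⟧ ∈ t.U ∧ X ∈ t.V

lemma eq_zero_of_comp_mono {X Y : t.heart.FullSubcategory} (f : X ⟶ Y) [Mono f] {W : T}
    (hW : (t.τV W)⟦(1 : ℤ)⟧ ∈ t.U) {k : W ⟶ X.obj} (hk : k ≫ f.hom = 0) : k = 0 := by
  obtain ⟨k, rfl⟩ := (t.π_comp_bijective W X.2.2).2 k
  dsimp only at hk ⊢
  have hk' : k ≫ f.hom = 0 := (t.π_comp_bijective W Y.2.2).1 (by simpa using hk)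
  let H : t.heart.FullSubcategory := ⟨t.τV W, hW, t.τV_mem W⟩
  have : (ObjectProperty.homMk k : H ⟶ X) = 0 := by
    rw [← cancel_mono f, zero_comp]
    ext
    exact hk'
  rw [show k = 0 from congrArg InducedCategory.Hom.hom this, comp_zero]

variable {C : T}

lemma truncU_shift_shift_mem_leftPerpPos (hV : t.V = leftPerpPos C) {Y : T}
    (hY : Y ∈ leftPerpPos C) : (t.τU (Y⟦(1 : ℤ)⟧))⟦(-1 : ℤ)⟧ ∈ leftPerpPos C := by
  refine (shift_mem_leftPerpPos_iff (-1)).2 fun j hj g => ?_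
  obtain ⟨e, rfl⟩ : ∃ e : Y⟦(1 : ℤ)⟧ ⟶ C⟦j⟧, g = t.ι _ ≫ e :=
    Triangle.yoneda_exact₂ _ (inv_rot_of_distTriang _ (t.triangle_distinguished _)) g
      (shift_neg_one_mem_leftPerpPos (hV ▸ t.τV_mem _) j (by omega) _)
  rw [shift_one_hom_eq_zero hY (by omega) e, comp_zero]

lemma exists_comp_bijective (hV : t.V = leftPerpPos C) (hC : C ∈ t.V) :
    ∃ θ : t.τV ((t.τU (C⟦(1 : ℤ)⟧))⟦(-1 : ℤ)⟧) ⟶ C,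
      ∀ M : T, M⟦(1 : ℤ)⟧ ∈ t.U → Function.Bijective (fun u : M ⟶ _ => u ≫ θ) := by
  have := t.isIso_π (hV ▸ t.truncU_shift_shift_mem_leftPerpPos hV (hV ▸ hC))
  refine ⟨inv (t.π _) ≫ t.ιShifted C, fun M hM => ?_⟩
  rw [bijective_comp_isIso_comp]
  exact t.ιShifted_comp_bijective (hV ▸ fun _ => shift_neg_one_mem_leftPerpPos) C hM

lemma hom_fiber_eq_zero_of_mono (hV : t.V = leftPerpPos C)
    (hH : ∀ X, (t.τV ((t.τU (X⟦(1 : ℤ)⟧))⟦(-1 : ℤ)⟧))⟦(1 : ℤ)⟧ ∈ t.U)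
    {X Y : t.heart.FullSubcategory} (f : X ⟶ Y) [Mono f] {E : T} {d : E ⟶ X.obj}
    {h : Y.obj ⟶ E⟦(1 : ℤ)⟧} (hT : Triangle.mk d f.hom h ∈ distTriang T) (w : E ⟶ C) :
    w = 0 := by
  have hdf : d ≫ f.hom = 0 := comp_distTriang_mor_zero₁₂ _ hT
  have hd : t.ιShifted E ≫ d = 0 :=
    t.eq_zero_of_comp_mono f (hH E) (by rw [Category.assoc, hdf, comp_zero])
  obtain ⟨x, rfl⟩ : ∃ x : X.obj ⟶ C, w = d ≫ x :=
    Triangle.yoneda_exact₂ _ (inv_rot_of_distTriang _ hT) w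
      (shift_neg_one_hom_eq_zero (hV ▸ Y.2.2) _)
  obtain ⟨y, hy⟩ : ∃ y : t.τV (E⟦(1 : ℤ)⟧) ⟶ C⟦(1 : ℤ)⟧, (d ≫ x)⟦(1 : ℤ)⟧' = t.π _ ≫ y :=
    Triangle.yoneda_exact₂ _ (t.triangle_distinguished _) _
      ((t.ιShifted_comp_eq_zero_iff _).1 (by rw [reassoc_of% hd, zero_comp]))
  rw [← Functor.map_eq_zero_iff (shiftFunctor T (1 : ℤ)), hy,
    (hV ▸ t.τV_mem _ : _ ∈ leftPerpPos C) 1 one_pos y, comp_zero]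

lemma injective_of_comp_bijective (hV : t.V = leftPerpPos C)
    (hH : ∀ X, (t.τV ((t.τU (X⟦(1 : ℤ)⟧))⟦(-1 : ℤ)⟧))⟦(1 : ℤ)⟧ ∈ t.U)
    (I : t.heart.FullSubcategory) (θ : I.obj ⟶ C)
    (hθ : ∀ M : t.heart.FullSubcategory, Function.Bijective (fun u : M.obj ⟶ I.obj => u ≫ θ)) :
    Injective I := by
  refine ⟨fun {X Y} g f _ => ?_⟩
  obtain ⟨E, d, h, hT⟩ := distinguished_cocone_triangle₁ f.hom
  obtain ⟨y, hy⟩ : ∃ y : Y.obj ⟶ C, g.hom ≫ θ = f.hom ≫ y :=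
    Triangle.yoneda_exact₂ _ hT _ (t.hom_fiber_eq_zero_of_mono hV hH f hT _)
  obtain ⟨y, rfl⟩ := (hθ Y).2 y
  refine ⟨ObjectProperty.homMk y, ObjectProperty.hom_ext _ ((hθ X).1 ?_)⟩
  simpa using hy.symm

lemma exists_ne_zero_of_comp_bijective (hV : t.V = leftPerpPos C)
    (I : t.heart.FullSubcategory) (θ : I.obj ⟶ C)
    (hθ : ∀ M : t.heart.FullSubcategory, Function.Bijective (fun u : M.obj ⟶ I.obj => u ≫ θ))
    (M : t.heart.FullSubcategory) (hM : ¬ IsZero M) : ∃ f : M ⟶ I, f ≠ 0 := by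
  by_contra! h
  refine hM ?_
  have h₀ : ∀ x : M.obj ⟶ C, x = 0 := fun x => by
    obtain ⟨u, rfl⟩ := (hθ M).2 x
    dsimp only
    rw [show u = 0 from congrArg InducedCategory.Hom.hom (h (ObjectProperty.homMk u)), zero_comp]
  have h₁ : M.obj⟦(1 : ℤ)⟧ ∈ t.V := hV ▸ shift_one_mem_leftPerpPos (hV ▸ M.2.2) h₀
  rw [IsZero.iff_id_eq_zero]
  ext
  change 𝟙 M.obj = 0
  rw [← Functor.map_eq_zero_iff (shiftFunctor T (1 : ℤ))]
  simpa using t.hom_eq_zero _ M.2.1 _ h₁ (𝟙 _)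

end TruncationData

end CategoryTheory

/-- for a partial cosilting object `C` with associated
t-structure `(U, V)` and heart `H(C) = U[-1] ∩ V`, the object `H⁰(C)` is an
injective cogenerator of the heart, and for `M` in the heart there is an
isomorphism `Hom_T(M, C) ≅ Hom_{H(C)}(M, H⁰(C))`. -/
theorem stmt_12 (T : Type u) [Category.{v} T] [HasZeroObject T] [Preadditive T]
    [HasShift T ℤ] [∀ n : ℤ, (shiftFunctor T n).Additive] [Pretriangulated T]
    (C : T) (U V : Set T)
    (t1 : ∀ X ∈ U, ∀ Y ∈ V, ∀ f : X ⟶ Y, f = 0)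
    (t2U : ∀ X ∈ U, (X⟦(1 : ℤ)⟧) ∈ U)
    (t2V : ∀ X ∈ V, (X⟦(-1 : ℤ)⟧) ∈ V)
    (τU τV : T → T)
    (hτU : ∀ X, τU X ∈ U) (hτV : ∀ X, τV X ∈ V)
    (htri : ∀ X : T, ∃ (f : τU X ⟶ X) (g : X ⟶ τV X)
      (h : τV X ⟶ (τU X)⟦(1 : ℤ)⟧), Triangle.mk f g h ∈ distTriang T)
    (hV : V = { Y : T | ∀ i : ℤ, 0 < i → ∀ f : Y ⟶ C⟦i⟧, f = 0 })
    (hC : C ∈ V)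
    -- the cohomological functor `H⁰` and the fact that it takes values in the
    -- heart `U[-1] ∩ V`
    (H0 : T → T) (hH0def : ∀ X, H0 X = τV ((τU (X⟦(1 : ℤ)⟧))⟦(-1 : ℤ)⟧))
    (hH0heart : ∀ X, ((H0 X)⟦(1 : ℤ)⟧ ∈ U) ∧ H0 X ∈ V) :
    letI Heart := ObjectProperty.FullSubcategory (fun X : T => (X⟦(1 : ℤ)⟧ ∈ U) ∧ X ∈ V)
    letI HC : Heart := ⟨H0 C, hH0heart C⟩
    Injective HC ∧
      (∀ M : Heart, ¬ IsZero M → ∃ f : M ⟶ HC, f ≠ 0) ∧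
      (∀ M : Heart, Nonempty ((M.obj ⟶ C) ≃ (M ⟶ HC))) := by
  choose ι π δ hT using htri
  let t : TruncationData T := ⟨U, V, t1, t2U, τU, τV, hτU, hτV, ι, π, δ, hT⟩
  obtain rfl : H0 = fun X => τV ((τU (X⟦(1 : ℤ)⟧))⟦(-1 : ℤ)⟧) := funext hH0def
  obtain ⟨θ, hθ⟩ := t.exists_comp_bijective hV hC
  have hθ' (M : t.heart.FullSubcategory) := hθ M.obj M.2.1
  exact ⟨t.injective_of_comp_bijective hV (fun X => (hH0heart X).1) _ θ hθ',
    t.exists_ne_zero_of_comp_bijective hV _ θ hθ',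
    fun M => ⟨(Equiv.ofBijective _ (hθ' M)).symm.trans
      ⟨fun f => ObjectProperty.homMk f, fun f => f.hom, fun _ => rfl, fun _ => rfl⟩⟩⟩
end
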